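/- arXiv:1210.1845 — 3 statements merged into one kernel-verified Lean document; each statement's English description precedes it below -/
import Mathlib

section
/- Let A : [T₁,T₂] → ℝ be a lower semi-continuous function with A(t) > 0 for all t, satisfying in the barrier sense the differential inequality d/dt⁺ A(t) ≤ (3/(4t)) A(t) − 4π for all t ∈ [T₁,T₂], where 0 < T₁ < T₂. Then the quantity t^{1/4}(t⁻¹ A(t) + 16π) is monotonically non-increasing on [T₁,T₂], and consequently T₂ < (1 + A(T₁)/(16π T₁))⁴ · T₁. -/
/-!
With φ(t) = t^{-3/4} A(t) + 16π t^{1/4} = t^{1/4} (t⁻¹ A(t) + 16π), the product rule for the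
upper right Dini derivative turns the hypothesis into
d/dt⁺ φ ≤ -(3/4) t^{-7/4} A + t^{-3/4} ((3/(4t)) A - 4π) + 4π t^{-3/4} = 0.
A lower semicontinuous function with nonpositive upper right Dini derivative is nonincreasing:
for ε > 0 the set where f(u) ≤ f(s) + ε (u - s) is closed by lower semicontinuity and open to the
right by the Dini bound, so continuous induction sweeps it across [s, t]. Comparing φ at the
endpoints and discarding A(T₂) > 0 leaves 16π T₂^{1/4} < T₁^{1/4} (A(T₁)/T₁ + 16π).
-/

open Set Filter Topology

def RightDiniLE (f : ℝ → ℝ) (t c : ℝ) : Prop :=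
  ∀ ε > 0, ∀ᶠ u in 𝓝[>] t, f u - f t ≤ (c + ε) * (u - t)

lemma rightDiniLE_of_forall_exists_delta {f : ℝ → ℝ} {t b c : ℝ} (htb : t < b)
    (hf : ∀ ε > 0, ∃ δ > 0, ∀ h : ℝ, 0 < h → h < δ → t + h ≤ b →
      f (t + h) - f t ≤ (c + ε) * h) :
    RightDiniLE f t c := by
  intro ε hε
  obtain ⟨δ, hδ, hbound⟩ := hf ε hε
  filter_upwards [Ioo_mem_nhdsGT (lt_min (lt_add_of_pos_right t hδ) htb)] with u hu
  have hub : u < min (t + δ) b := hu.2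
  simpa using hbound (u - t) (sub_pos.2 hu.1) (by linarith [min_le_left (t + δ) b])
    (by linarith [min_le_right (t + δ) b])

lemma HasDerivWithinAt.rightDiniLE {f : ℝ → ℝ} {f' t : ℝ}
    (hf : HasDerivWithinAt f f' (Ioi t) t) : RightDiniLE f t f' := by
  intro ε hε
  have hslope := (hasDerivWithinAt_iff_tendsto_slope' (lt_irrefl t)).1 hf
  filter_upwards [hslope.eventually (eventually_lt_nhds (lt_add_of_pos_right f' hε)),
    self_mem_nhdsWithin] with u hu hut
  rw [slope_def_field, div_lt_iff₀ (sub_pos.2 hut)] at hu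
  exact hu.le

lemma RightDiniLE.add {f g : ℝ → ℝ} {t c d : ℝ} (hf : RightDiniLE f t c)
    (hg : RightDiniLE g t d) : RightDiniLE (fun u => f u + g u) t (c + d) := by
  intro ε hε
  filter_upwards [hf (ε / 2) (half_pos hε), hg (ε / 2) (half_pos hε)] with u hfu hgu
  linarith

lemma RightDiniLE.hasDerivAt_mul {f g : ℝ → ℝ} {t c g' : ℝ} (hf : RightDiniLE f t c)
    (hg : HasDerivAt g g' t) (hgt : 0 < g t) :
    RightDiniLE (fun u => g u * f u) t (g' * f t + g t * c) := by
  intro ε hε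
  set η := ε / (2 * g t)
  have hη : 0 < η := by positivity
  have hgη : g t * η = ε / 2 := by simp only [η]; field_simp
  -- `f` stays below the line `ℓ` on the right of `t`, and `g * ℓ` is differentiable.
  let ℓ : ℝ → ℝ := fun u => f t + (c + η) * (u - t)
  have hℓt : ℓ t = f t := by simp [ℓ]
  have hℓ : HasDerivAt ℓ (c + η) t :=
    ((((hasDerivAt_id' t).sub_const t).const_mul (c + η)).const_add (f t)).congr_deriv
      (mul_one _)
  have hgℓ : HasDerivAt (fun u => g u * ℓ u) (g' * f t + g t * (c + η)) t := by
    rw [← hℓt]; exact hg.mul hℓ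
  have hg_pos : ∀ᶠ u in 𝓝[>] t, 0 < g u :=
    (hg.continuousAt.eventually (eventually_gt_nhds hgt)).filter_mono nhdsWithin_le_nhds
  filter_upwards [hf η hη, hgℓ.hasDerivWithinAt.rightDiniLE (ε / 2) (half_pos hε), hg_pos]
    with u hfu hgℓu hgu
  have hle : g u * f u ≤ g u * ℓ u := mul_le_mul_of_nonneg_left (by simp [ℓ]; linarith) hgu.le
  rw [hℓt] at hgℓu
  calc g u * f u - g t * f t ≤ (g' * f t + g t * (c + η) + ε / 2) * (u - t) := by linarith
    _ = (g' * f t + g t * c + ε) * (u - t) := by rw [mul_add (g t), hgη]; ring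

lemma LowerSemicontinuousWithinAt.mul_of_pos {α : Type*} [TopologicalSpace α] {f g : α → ℝ}
    {s : Set α} {x : α} (hf : LowerSemicontinuousWithinAt f s x)
    (hg : ContinuousWithinAt g s x) (hgx : 0 < g x) :
    LowerSemicontinuousWithinAt (fun u => g u * f u) s x := by
  intro y hy
  obtain ⟨z, hyz, hzf⟩ := exists_between ((div_lt_iff₀' hgx).2 hy)
  have hygz : y < g x * z := (div_lt_iff₀' hgx).1 hyz
  filter_upwards [hf z hzf, (hg.mul_const z).eventually (eventually_gt_nhds hygz),
    hg.eventually (eventually_gt_nhds hgx)] with u hzu hyu hgu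
  exact hyu.trans_le (mul_le_mul_of_nonneg_left hzu.le hgu.le)

lemma LowerSemicontinuousOn.mul_of_pos {α : Type*} [TopologicalSpace α] {f g : α → ℝ}
    {s : Set α} (hf : LowerSemicontinuousOn f s) (hg : ContinuousOn g s)
    (hgs : ∀ x ∈ s, 0 < g x) : LowerSemicontinuousOn (fun u => g u * f u) s :=
  fun x hx => LowerSemicontinuousWithinAt.mul_of_pos (hf x hx) (hg x hx) (hgs x hx)

theorem antitoneOn_of_rightDiniLE_zero {f : ℝ → ℝ} {a b : ℝ}
    (hf : LowerSemicontinuousOn f (Icc a b)) (hd : ∀ t ∈ Ico a b, RightDiniLE f t 0) :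
    AntitoneOn f (Icc a b) := by
  intro s hs t ht hst
  have hsub : Icc s t ⊆ Icc a b := Icc_subset_Icc hs.1 ht.2
  have key : ∀ ε > 0, f t ≤ f s + ε * (t - s) := by
    intro ε hε
    set g : ℝ → ℝ := fun u => f u - ε * (u - s)
    have hg : LowerSemicontinuousOn g (Icc s t) := by
      have hlin : ContinuousOn (fun u => -(ε * (u - s))) (Icc s t) := by fun_prop
      simpa only [g, sub_eq_add_neg] using (hf.mono hsub).add hlin.lowerSemicontinuousOn
    have hclosed : IsClosed (g ⁻¹' Iic (f s) ∩ Icc s t) := by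
      rw [inter_comm]; exact (hg.isCompact_inter_preimage_Iic isCompact_Icc _).isClosed
    have hgt : t ∈ g ⁻¹' Iic (f s) := by
      refine hclosed.mem_of_ge_of_forall_exists_gt (by simp [g]) hst ?_
      rintro x ⟨hxS, hx⟩
      obtain ⟨u, hfu, hu⟩ := ((hd x ⟨hs.1.trans hx.1, hx.2.trans_le ht.2⟩ ε hε).and
        (Ioc_mem_nhdsGT hx.2)).exists
      refine ⟨u, ?_, hu⟩
      simp only [g, mem_preimage, mem_Iic] at hxS ⊢
      linarith
    simp only [g, mem_preimage, mem_Iic] at hgt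
    linarith
  have hlim : Tendsto (fun ε => f s + ε * (t - s)) (𝓝[>] 0) (𝓝 (f s)) := by
    have : Continuous fun ε : ℝ => f s + ε * (t - s) := by fun_prop
    simpa using (this.tendsto 0).mono_left nhdsWithin_le_nhds
  exact ge_of_tendsto hlim (eventually_nhdsWithin_of_forall key)

lemma lt_pow_four_mul_of_rpow_quarter_lt {x y K : ℝ} (hx : 0 ≤ x) (hy : 0 ≤ y)
    (h : x ^ ((1 : ℝ) / 4) < y ^ ((1 : ℝ) / 4) * K) : x < K ^ 4 * y := by
  have hpow_quarter (z : ℝ) (hz : 0 ≤ z) : (z ^ ((1 : ℝ) / 4)) ^ 4 = z := by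
    rw [← Real.rpow_natCast, ← Real.rpow_mul hz]; norm_num
  calc x = (x ^ ((1 : ℝ) / 4)) ^ 4 := (hpow_quarter x hx).symm
    _ < (y ^ ((1 : ℝ) / 4) * K) ^ 4 := by gcongr
    _ = K ^ 4 * y := by rw [mul_pow, hpow_quarter y hy, mul_comm]

noncomputable def rescaledArea (A : ℝ → ℝ) (t : ℝ) : ℝ :=
  t ^ (-(3 : ℝ) / 4) * A t + 16 * Real.pi * t ^ ((1 : ℝ) / 4)

lemma rpow_quarter_mul_eq_rescaledArea (A : ℝ → ℝ) {t : ℝ} (ht : 0 < t) :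
    t ^ ((1 : ℝ) / 4) * (A t / t + 16 * Real.pi) = rescaledArea A t := by
  have h : t ^ (-(3 : ℝ) / 4) = t ^ ((1 : ℝ) / 4) / t := by
    rw [show -(3 : ℝ) / 4 = 1 / 4 - 1 by norm_num, Real.rpow_sub ht, Real.rpow_one]
  rw [rescaledArea, h]
  field_simp

lemma lowerSemicontinuousOn_rescaledArea {A : ℝ → ℝ} {s : Set ℝ}
    (hA : LowerSemicontinuousOn A s) (hs : ∀ t ∈ s, 0 < t) :
    LowerSemicontinuousOn (rescaledArea A) s := by
  have hs' : ∀ t ∈ s, t ≠ 0 := fun t ht => (hs t ht).ne'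
  refine LowerSemicontinuousOn.add ?_ (ContinuousOn.lowerSemicontinuousOn ?_)
  · exact hA.mul_of_pos (continuousOn_id.rpow_const fun t ht => Or.inl (hs' t ht))
      fun t ht => Real.rpow_pos_of_pos (hs t ht) _
  · exact continuousOn_const.mul (continuousOn_id.rpow_const fun t ht => Or.inl (hs' t ht))

lemma rightDiniLE_rescaledArea {A : ℝ → ℝ} {t : ℝ} (ht : 0 < t)
    (hA : RightDiniLE A t (3 / (4 * t) * A t - 4 * Real.pi)) :
    RightDiniLE (rescaledArea A) t 0 := by
  have hpow (p : ℝ) : HasDerivAt (fun u => u ^ p) (p * t ^ (p - 1)) t :=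
    Real.hasDerivAt_rpow_const (Or.inl ht.ne')
  have h := (hA.hasDerivAt_mul (hpow (-(3 : ℝ) / 4)) (Real.rpow_pos_of_pos ht _)).add
    (((hpow ((1 : ℝ) / 4)).const_mul (16 * Real.pi)).hasDerivWithinAt.rightDiniLE)
  unfold rescaledArea
  convert h using 1
  rw [Real.rpow_sub ht, Real.rpow_one, show (1 : ℝ) / 4 - 1 = -3 / 4 by norm_num]
  field_simp
  ring

theorem stmt_2 (T₁ T₂ : ℝ) (hT₁ : 0 < T₁) (hT₁₂ : T₁ < T₂)
    (A : ℝ → ℝ)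
    (hpos : ∀ t ∈ Set.Icc T₁ T₂, 0 < A t)
    (hlsc : LowerSemicontinuousOn A (Set.Icc T₁ T₂))
    -- upper right Dini derivative bound: d/dt⁺ A(t) ≤ (3/(4t)) A(t) − 4π
    (hdini : ∀ t ∈ Set.Ico T₁ T₂, ∀ ε > 0, ∃ δ > 0, ∀ h : ℝ, 0 < h → h < δ → t + h ≤ T₂ →
      A (t + h) - A t ≤ (3 / (4 * t) * A t - 4 * Real.pi + ε) * h) :
    (∀ s ∈ Set.Icc T₁ T₂, ∀ t ∈ Set.Icc T₁ T₂, s ≤ t →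
      t ^ ((1:ℝ)/4) * (A t / t + 16 * Real.pi) ≤ s ^ ((1:ℝ)/4) * (A s / s + 16 * Real.pi)) ∧
    T₂ < (1 + A T₁ / (16 * Real.pi * T₁)) ^ 4 * T₁ := by
  have hIcc_pos : ∀ t ∈ Icc T₁ T₂, 0 < t := fun t ht => hT₁.trans_le ht.1
  have hanti : AntitoneOn (rescaledArea A) (Icc T₁ T₂) :=
    antitoneOn_of_rightDiniLE_zero (lowerSemicontinuousOn_rescaledArea hlsc hIcc_pos)
      fun t ht => rightDiniLE_rescaledArea (hIcc_pos t (Ico_subset_Icc_self ht))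
        (rightDiniLE_of_forall_exists_delta ht.2 (hdini t ht))
  have hmono : ∀ s ∈ Icc T₁ T₂, ∀ t ∈ Icc T₁ T₂, s ≤ t →
      t ^ ((1:ℝ)/4) * (A t / t + 16 * Real.pi) ≤
        s ^ ((1:ℝ)/4) * (A s / s + 16 * Real.pi) := by
    intro s hs t ht hst
    rw [rpow_quarter_mul_eq_rescaledArea A (hIcc_pos s hs),
      rpow_quarter_mul_eq_rescaledArea A (hIcc_pos t ht)]
    exact hanti hs ht hst
  refine ⟨hmono, ?_⟩
  have hT₂ : 0 < T₂ := hT₁.trans hT₁₂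
  have hmem₂ : T₂ ∈ Icc T₁ T₂ := ⟨hT₁₂.le, le_rfl⟩
  have hend := hmono T₁ ⟨le_rfl, hT₁₂.le⟩ T₂ hmem₂ hT₁₂.le
  have hA₂ : 0 < A T₂ / T₂ := div_pos (hpos T₂ hmem₂) hT₂
  have hK : T₁ ^ ((1:ℝ)/4) * (A T₁ / T₁ + 16 * Real.pi) =
      16 * Real.pi * (T₁ ^ ((1:ℝ)/4) * (1 + A T₁ / (16 * Real.pi * T₁))) := by
    field_simp; ring
  refine lt_pow_four_mul_of_rpow_quarter_lt hT₂.le hT₁.le ?_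
  nlinarith [Real.rpow_pos_of_pos hT₂ ((1:ℝ)/4), Real.pi_pos]
end

section
/- Let A : [T₁,T₂] → ℝ be a positive lower semi-continuous function satisfying in the barrier sense d/dt⁺ A(t) ≤ (3/(4t)) A(t) − 2π χ + m a Γ + m a b for constants χ ∈ ℝ, m ∈ ℕ, a, Γ, b > 0 with m a (Γ + b) < 2πχ. Then t^{1/4}(t⁻¹A(t) + 4(2πχ − ma(Γ+b))) is non-increasing on [T₁,T₂], and T₂ < (1 + A(T₁)/(4T₁(2πχ − ma(Γ+b))))⁴ · T₁. -/
/-!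
With `c = 2πχ - ma(Γ + b) > 0`, the inequality reads `A' ≤ 3A/(4t) - c`. Multiplying by the
integrating factor `t^(-3/4)` shows that `g(t) = t^(-3/4) A(t) + 4c t^(1/4) = t^(1/4)(A(t)/t + 4c)`
has non-positive upper right Dini derivative; being lower semicontinuous, `g` is then
non-increasing. Since `A > 0`, `4c T₂^(1/4) < g(T₂) ≤ g(T₁)`, and taking fourth powers gives the
bound on `T₂`.
-/

open Set Filter Topology

theorem LowerSemicontinuousOn.isClosed_inter_preimage_Iic {α γ : Type*} [TopologicalSpace α]
    [LinearOrder γ] [TopologicalSpace γ] [OrderTopology γ] {f : α → γ} {s : Set α}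
    (hf : LowerSemicontinuousOn f s) (hs : IsClosed s) (y : γ) :
    IsClosed (s ∩ f ⁻¹' Iic y) := by
  obtain ⟨v, hv, hsv⟩ := lowerSemicontinuousOn_iff_preimage_Iic.1 hf y
  exact hsv ▸ hs.inter hv

theorem ContinuousOn.mul_lowerSemicontinuousOn {α : Type*} [TopologicalSpace α] {u f : α → ℝ}
    {s : Set α} (hu : ContinuousOn u s) (hu_pos : ∀ x ∈ s, 0 < u x)
    (hf : LowerSemicontinuousOn f s) : LowerSemicontinuousOn (fun z => u z * f z) s := by
  intro x hx y hy
  have hux := hu_pos x hx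
  obtain ⟨y', hyy', hy'f⟩ := exists_between ((div_lt_iff₀' hux).2 hy)
  filter_upwards [hf x hx y' hy'f, (hu x hx).eventually_const_lt hux,
    ((hu x hx).mul_const y').eventually_const_lt ((div_lt_iff₀' hux).1 hyy')]
    with z hfz huz hyz
  exact hyz.trans (mul_lt_mul_of_pos_left hfz huz)

/-- The upper right Dini derivative `limsup_{z → x⁺} slope f x z` is at most `K`; stated through a
majorant of the slope tending to `K`, which avoids the boundedness side conditions of `limsup`. -/
def UpperRightDiniLE (f : ℝ → ℝ) (x K : ℝ) : Prop :=
  ∃ φ : ℝ → ℝ, Tendsto φ (𝓝[>] x) (𝓝 K) ∧ ∀ᶠ z in 𝓝[>] x, slope f x z ≤ φ z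

theorem upperRightDiniLE_of_forall_pos {f : ℝ → ℝ} {x K : ℝ}
    (h : ∀ ε > 0, ∀ᶠ z in 𝓝[>] x, slope f x z ≤ K + ε) : UpperRightDiniLE f x K := by
  refine ⟨fun z => max (slope f x z) K, tendsto_order.2 ⟨fun r hr => ?_, fun r hr => ?_⟩,
    Eventually.of_forall fun z => le_max_left _ _⟩
  · exact Eventually.of_forall fun z => hr.trans_le (le_max_right _ _)
  · filter_upwards [h ((r - K) / 2) (by linarith)] with z hz
    exact max_lt (by linarith) hr

theorem upperRightDiniLE_of_forall_sub_le {f : ℝ → ℝ} {x b K : ℝ} (hxb : x < b)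
    (hf : ∀ ε > 0, ∃ δ > 0, ∀ h : ℝ, 0 < h → h < δ → x + h ≤ b →
      f (x + h) - f x ≤ (K + ε) * h) :
    UpperRightDiniLE f x K := by
  refine upperRightDiniLE_of_forall_pos fun ε hε => ?_
  obtain ⟨δ, hδ, hfδ⟩ := hf ε hε
  filter_upwards [Ioo_mem_nhdsGT (lt_min (lt_add_of_pos_right x hδ) hxb)] with z hz
  have hzx : 0 < z - x := sub_pos.2 hz.1
  have hfz := hfδ (z - x) hzx (by linarith [hz.2.trans_le (min_le_left _ _)])
    (by linarith [hz.2.trans_le (min_le_right _ _)])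
  rw [add_sub_cancel] at hfz
  rwa [slope_def_field, div_le_iff₀ hzx]

namespace UpperRightDiniLE

variable {f u : ℝ → ℝ} {x K : ℝ}

theorem eventually_slope_lt (h : UpperRightDiniLE f x K) {r : ℝ} (hr : K < r) :
    ∀ᶠ z in 𝓝[>] x, slope f x z < r := by
  obtain ⟨φ, hφ, hfφ⟩ := h
  filter_upwards [hfφ, hφ.eventually_lt_const hr] with z h₁ h₂
  exact h₁.trans_lt h₂

theorem add_hasDerivAt (h : UpperRightDiniLE f x K) {u' : ℝ} (hu : HasDerivAt u u' x) :
    UpperRightDiniLE (fun z => f z + u z) x (K + u') := by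
  obtain ⟨φ, hφ, hfφ⟩ := h
  refine ⟨fun z => φ z + slope u x z, hφ.add (hu.tendsto_slope.mono_left (nhdsGT_le_nhdsNE x)),
    ?_⟩
  filter_upwards [hfφ] with z hz
  have : slope (fun z => f z + u z) x z = slope f x z + slope u x z := by
    simp only [slope_def_field]; ring
  rw [this]; linarith

theorem mul_hasDerivAt (h : UpperRightDiniLE f x K) {u' : ℝ} (hu : HasDerivAt u u' x)
    (hux : 0 < u x) : UpperRightDiniLE (fun z => u z * f z) x (u x * K + u' * f x) := by
  obtain ⟨φ, hφ, hfφ⟩ := h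
  have hu_cont : Tendsto u (𝓝[>] x) (𝓝 (u x)) := hu.continuousAt.tendsto.mono_left
    nhdsWithin_le_nhds
  refine ⟨fun z => u z * φ z + slope u x z * f x, (hu_cont.mul hφ).add
    ((hu.tendsto_slope.mono_left (nhdsGT_le_nhdsNE x)).mul_const _), ?_⟩
  filter_upwards [hfφ, hu_cont.eventually_const_lt hux] with z hz huz
  have : slope (fun z => u z * f z) x z = u z * slope f x z + slope u x z * f x := by
    simp only [slope_def_field]; ring
  rw [this]
  gcongr

end UpperRightDiniLE

theorem antitoneOn_of_upperRightDiniLE_zero {f : ℝ → ℝ} {a b : ℝ}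
    (hf : LowerSemicontinuousOn f (Icc a b)) (hf' : ∀ x ∈ Ico a b, UpperRightDiniLE f x 0) :
    AntitoneOn f (Icc a b) := by
  intro s hs t ht hst
  -- `{z | f z ≤ f s + ε (z - s)}` is closed in `[s, t]` by lower semicontinuity and a right
  -- neighbourhood of each of its points by the Dini bound, so it contains `[s, t]`.
  have key : ∀ ε > 0, f t + -ε * (t - s) ≤ f s := by
    intro ε hε
    have hlsc : LowerSemicontinuousOn (fun z => f z + -ε * (z - s)) (Icc s t) :=
      (hf.mono (Icc_subset_Icc hs.1 ht.2)).add (ContinuousOn.lowerSemicontinuousOn (by fun_prop))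
    have hclosed := hlsc.isClosed_inter_preimage_Iic isClosed_Icc (f s)
    rw [inter_comm] at hclosed
    refine hclosed.Icc_subset_of_forall_mem_nhdsWithin (by simp) (fun x ⟨hx, hxI⟩ => ?_)
      ⟨hst, le_rfl⟩
    filter_upwards [(hf' x ⟨hs.1.trans hxI.1, hxI.2.trans_le ht.2⟩).eventually_slope_lt hε,
      self_mem_nhdsWithin] with z hz hxz
    rw [slope_def_field, div_lt_iff₀ (sub_pos.2 hxz)] at hz
    simp only [mem_preimage, mem_Iic] at hx ⊢
    linarith
  refine ge_of_tendsto (x := 𝓝[>] (0 : ℝ)) (f := fun ε => f s + ε * (t - s)) ?_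
    (eventually_mem_nhdsWithin.mono fun ε hε => by linarith [key ε hε])
  exact tendsto_nhdsWithin_of_tendsto_nhds (Continuous.tendsto' (by fun_prop) _ _ (by simp))

theorem UpperRightDiniLE.rpow_mul_add_rpow {A : ℝ → ℝ} {x c : ℝ} (hx : 0 < x)
    (hA : UpperRightDiniLE A x (3 / (4 * x) * A x - c)) :
    UpperRightDiniLE (fun r => r ^ ((1 : ℝ) / 4 - 1) * A r + 4 * c * r ^ ((1 : ℝ) / 4)) x 0 := by
  have h := (hA.mul_hasDerivAt (Real.hasDerivAt_rpow_const (p := (1 : ℝ) / 4 - 1) (Or.inl hx.ne'))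
    (Real.rpow_pos_of_pos hx _)).add_hasDerivAt
    ((Real.hasDerivAt_rpow_const (p := (1 : ℝ) / 4) (Or.inl hx.ne')).const_mul (4 * c))
  convert h using 1
  rw [Real.rpow_sub_one hx.ne' ((1 : ℝ) / 4 - 1)]
  field_simp
  ring

theorem lt_one_add_div_pow_four_mul {T₁ T₂ c A₁ A₂ : ℝ} (hT₁ : 0 < T₁) (hT₁₂ : T₁ ≤ T₂)
    (hc : 0 < c) (hA₂ : 0 < A₂)
    (h : T₂ ^ ((1 : ℝ) / 4) * (A₂ / T₂ + 4 * c) ≤ T₁ ^ ((1 : ℝ) / 4) * (A₁ / T₁ + 4 * c)) :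
    T₂ < (1 + A₁ / (4 * T₁ * c)) ^ 4 * T₁ := by
  have hT₂ : 0 < T₂ := hT₁.trans_le hT₁₂
  have hroot : T₂ ^ ((1 : ℝ) / 4) < T₁ ^ ((1 : ℝ) / 4) * (1 + A₁ / (4 * T₁ * c)) := by
    refine lt_of_mul_lt_mul_left ?_ (by positivity : (0 : ℝ) ≤ 4 * c)
    calc 4 * c * T₂ ^ ((1 : ℝ) / 4) < T₂ ^ ((1 : ℝ) / 4) * (A₂ / T₂ + 4 * c) := by
          have : 0 < T₂ ^ ((1 : ℝ) / 4) * (A₂ / T₂) := by positivity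
          linarith
      _ ≤ T₁ ^ ((1 : ℝ) / 4) * (A₁ / T₁ + 4 * c) := h
      _ = 4 * c * (T₁ ^ ((1 : ℝ) / 4) * (1 + A₁ / (4 * T₁ * c))) := by
          field_simp
          ring
  have hpow : ∀ {r : ℝ}, 0 ≤ r → (r ^ ((1 : ℝ) / 4)) ^ 4 = r := fun hr => by
    simpa using Real.rpow_inv_natCast_pow hr (by norm_num : (4 : ℕ) ≠ 0)
  calc T₂ = (T₂ ^ ((1 : ℝ) / 4)) ^ 4 := (hpow hT₂.le).symm
    _ < (T₁ ^ ((1 : ℝ) / 4) * (1 + A₁ / (4 * T₁ * c))) ^ 4 :=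
        pow_lt_pow_left₀ hroot (by positivity) (by norm_num)
    _ = (1 + A₁ / (4 * T₁ * c)) ^ 4 * T₁ := by rw [mul_pow, hpow hT₁.le, mul_comm]

theorem stmt_3_general (T₁ T₂ : ℝ) (hT₁ : 0 < T₁) (hT₁₂ : T₁ < T₂)
    (χ : ℝ) (m : ℕ) (a Γ b : ℝ)
    (hmain : (m : ℝ) * a * (Γ + b) < 2 * Real.pi * χ)
    (A : ℝ → ℝ)
    (hpos : ∀ t ∈ Set.Icc T₁ T₂, 0 < A t)
    (hlsc : LowerSemicontinuousOn A (Set.Icc T₁ T₂))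
    (hdini : ∀ t ∈ Set.Ico T₁ T₂, ∀ ε > 0, ∃ δ > 0, ∀ h : ℝ, 0 < h → h < δ → t + h ≤ T₂ →
      A (t + h) - A t ≤
        (3 / (4 * t) * A t - 2 * Real.pi * χ + (m : ℝ) * a * Γ + (m : ℝ) * a * b + ε) * h) :
    (∀ s ∈ Set.Icc T₁ T₂, ∀ t ∈ Set.Icc T₁ T₂, s ≤ t →
      t ^ ((1:ℝ)/4) * (A t / t + 4 * (2 * Real.pi * χ - (m : ℝ) * a * (Γ + b))) ≤
        s ^ ((1:ℝ)/4) * (A s / s + 4 * (2 * Real.pi * χ - (m : ℝ) * a * (Γ + b)))) ∧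
    T₂ < (1 + A T₁ / (4 * T₁ * (2 * Real.pi * χ - (m : ℝ) * a * (Γ + b)))) ^ 4 * T₁ := by
  set c := 2 * Real.pi * χ - m * a * (Γ + b) with hc_def
  have hpos_of_mem : ∀ t ∈ Icc T₁ T₂, 0 < t := fun t ht => hT₁.trans_le ht.1
  have hrpow_cont : ∀ p : ℝ, ContinuousOn (fun r : ℝ => r ^ p) (Icc T₁ T₂) := fun p =>
    continuousOn_id.rpow_const fun t ht => Or.inl (hpos_of_mem t ht).ne'
  have hg_lsc : LowerSemicontinuousOn
      (fun r => r ^ ((1 : ℝ) / 4 - 1) * A r + 4 * c * r ^ ((1 : ℝ) / 4)) (Icc T₁ T₂) :=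
    ((hrpow_cont _).mul_lowerSemicontinuousOn
      (fun t ht => Real.rpow_pos_of_pos (hpos_of_mem t ht) _) hlsc).add
      (continuousOn_const.mul (hrpow_cont _)).lowerSemicontinuousOn
  have hg_anti := antitoneOn_of_upperRightDiniLE_zero hg_lsc fun t ht =>
    UpperRightDiniLE.rpow_mul_add_rpow (hT₁.trans_le ht.1) <| by
      convert upperRightDiniLE_of_forall_sub_le ht.2 (hdini t ht) using 1
      rw [hc_def]; ring
  have hg_eq : ∀ r ∈ Icc T₁ T₂, r ^ ((1 : ℝ) / 4 - 1) * A r + 4 * c * r ^ ((1 : ℝ) / 4) =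
      r ^ ((1 : ℝ) / 4) * (A r / r + 4 * c) := fun r hr => by
    rw [Real.rpow_sub_one (hpos_of_mem r hr).ne']; ring
  have hmono : ∀ s ∈ Icc T₁ T₂, ∀ t ∈ Icc T₁ T₂, s ≤ t →
      t ^ ((1:ℝ)/4) * (A t / t + 4 * c) ≤ s ^ ((1:ℝ)/4) * (A s / s + 4 * c) :=
    fun s hs t ht hst => by simpa only [hg_eq s hs, hg_eq t ht] using hg_anti hs ht hst
  have hT₁_mem : T₁ ∈ Icc T₁ T₂ := left_mem_Icc.2 hT₁₂.le
  have hT₂_mem : T₂ ∈ Icc T₁ T₂ := right_mem_Icc.2 hT₁₂.le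
  exact ⟨hmono, lt_one_add_div_pow_four_mul hT₁ hT₁₂.le (sub_pos.2 hmain) (hpos T₂ hT₂_mem)
    (hmono T₁ hT₁_mem T₂ hT₂_mem hT₁₂.le)⟩

theorem stmt_3 (T₁ T₂ : ℝ) (hT₁ : 0 < T₁) (hT₁₂ : T₁ < T₂)
    (χ : ℝ) (m : ℕ) (a Γ b : ℝ) (ha : 0 < a) (hΓ : 0 < Γ) (hb : 0 < b)
    (hmain : (m : ℝ) * a * (Γ + b) < 2 * Real.pi * χ)
    (A : ℝ → ℝ)
    (hpos : ∀ t ∈ Set.Icc T₁ T₂, 0 < A t)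
    (hlsc : LowerSemicontinuousOn A (Set.Icc T₁ T₂))
    (hdini : ∀ t ∈ Set.Ico T₁ T₂, ∀ ε > 0, ∃ δ > 0, ∀ h : ℝ, 0 < h → h < δ → t + h ≤ T₂ →
      A (t + h) - A t ≤
        (3 / (4 * t) * A t - 2 * Real.pi * χ + (m : ℝ) * a * Γ + (m : ℝ) * a * b + ε) * h) :
    (∀ s ∈ Set.Icc T₁ T₂, ∀ t ∈ Set.Icc T₁ T₂, s ≤ t →
      t ^ ((1:ℝ)/4) * (A t / t + 4 * (2 * Real.pi * χ - (m : ℝ) * a * (Γ + b))) ≤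
        s ^ ((1:ℝ)/4) * (A s / s + 4 * (2 * Real.pi * χ - (m : ℝ) * a * (Γ + b)))) ∧
    T₂ < (1 + A T₁ / (4 * T₁ * (2 * Real.pi * χ - (m : ℝ) * a * (Γ + b)))) ^ 4 * T₁ :=
  stmt_3_general T₁ T₂ hT₁ hT₁₂ χ m a Γ b hmain A hpos hlsc hdini
end

section
/- For every K < ∞ there exists r̄ = r̄(K) > 0 such that: if r₀ ≤ r̄ √t₀, t₀/2 ≤ t ≤ t₀, and (M,g) is a Riemannian 3-manifold of t⁻¹-positive curvature with |Rm| < K r₀⁻² on M, then the sectional curvature satisfies sec ≥ −(1/2) r₀⁻² on M. -/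
/- STATEMENT 10: For every K < ∞ there exists r̄ = r̄(K) > 0 such that: if r₀ ≤ r̄√t₀,
t₀/2 ≤ t ≤ t₀, and (M,g) is a Riemannian 3-manifold of t⁻¹-positive curvature with
|Rm| < K r₀⁻² on M, then the sectional curvature satisfies sec ≥ −(1/2) r₀⁻² on M.

Formalization: the relevant pointwise curvature data of the 3-manifold (M,g) is recorded by
functions `secMin` (the infimum of the sectional curvatures at a point), `scal` (the scalar
curvature) and `normRm` (the norm of the curvature operator), together with the algebraic
relation scal ≤ 6·|Rm| valid in dimension 3.  φ-positive curvature (here φ = t⁻¹) means: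
at every point there is X > 0 with sec ≥ −X, scal ≥ −(3/2)φ and
scal ≥ 2X(log(2X) − log φ − 3). -/
theorem stmt_10 (K : ℝ) :
    ∃ rbar : ℝ, 0 < rbar ∧
      ∀ (M : Type) (secMin scal normRm : M → ℝ) (r₀ t t₀ : ℝ),
        0 < r₀ → 0 < t₀ → r₀ ≤ rbar * Real.sqrt t₀ → t₀ / 2 ≤ t → t ≤ t₀ →
        (∀ x, scal x ≤ 6 * normRm x) →
        -- the metric has t⁻¹-positive curvature:
        (∀ x, ∃ X : ℝ, 0 < X ∧ -X ≤ secMin x ∧ -(3/2) * t⁻¹ ≤ scal x ∧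
          2 * X * (Real.log (2 * X) - Real.log t⁻¹ - 3) ≤ scal x) →
        -- |Rm| < K r₀⁻² on M:
        (∀ x, normRm x < K * (r₀ ^ 2)⁻¹) →
        -- conclusion: sec ≥ −(1/2) r₀⁻² on M:
        ∀ x, -(1/2) * (r₀ ^ 2)⁻¹ ≤ secMin x := by
  set K' := max K 0 with hK'
  have hK'0 : 0 ≤ K' := le_max_right _ _
  refine ⟨Real.exp (-(6 * K' + 4)), Real.exp_pos _, ?_⟩
  intro M secMin scal normRm r₀ t t₀ hr₀ ht₀ hrle ht1 ht2 hscal hpos hRm x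
  obtain ⟨X, hX, hsec, _, hlog⟩ := hpos x
  set R : ℝ := (r₀ ^ 2)⁻¹ with hR
  have hRpos : 0 < R := by positivity
  by_cases hcase : X ≤ (1/2) * R
  · linarith
  push_neg at hcase
  exfalso
  set rbar := Real.exp (-(6 * K' + 4)) with hrbar
  have hrbarpos : 0 < rbar := Real.exp_pos _
  -- r₀² ≤ rbar² * t₀
  have hr2 : r₀ ^ 2 ≤ rbar ^ 2 * t₀ := by
    have h1 : r₀ ^ 2 ≤ (rbar * Real.sqrt t₀) ^ 2 := by
      apply pow_le_pow_left₀ hr₀.le hrle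
    calc r₀ ^ 2 ≤ (rbar * Real.sqrt t₀) ^ 2 := h1
      _ = rbar ^ 2 * t₀ := by
          rw [mul_pow, Real.sq_sqrt ht₀.le]
  have htpos : 0 < t := by linarith
  -- t ≥ r₀² / (2 rbar²)
  have ht : r₀ ^ 2 / (2 * rbar ^ 2) ≤ t := by
    rw [div_le_iff₀ (by positivity)]
    nlinarith
  -- log t bound
  have hlogt : Real.log (r₀ ^ 2) - Real.log (2 * rbar ^ 2) ≤ Real.log t := by
    have := Real.log_le_log (by positivity) ht
    rwa [Real.log_div (by positivity) (by positivity)] at this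
  -- log (2X) bound
  have h2X : R < 2 * X := by linarith
  have hlog2X : Real.log R ≤ Real.log (2 * X) :=
    Real.log_le_log hRpos h2X.le
  have hlogR : Real.log R = -Real.log (r₀ ^ 2) := by
    rw [hR, Real.log_inv]
  -- log(2 rbar²)
  have hlogrbar : Real.log (2 * rbar ^ 2) = Real.log 2 - 2 * (6 * K' + 4) := by
    rw [Real.log_mul (by norm_num) (by positivity), Real.log_pow, hrbar, Real.log_exp]
    push_cast; ring
  have hlog2 : Real.log 2 < 1 := by
    have := Real.log_lt_sub_one_of_pos (x := 2) (by norm_num) (by norm_num)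
    linarith
  -- the factor c := log(2X) + log t - 3 is ≥ 6K' + 1
  have hlogtinv : Real.log t⁻¹ = -Real.log t := Real.log_inv t
  have hc : 6 * K' + 1 ≤ Real.log (2 * X) - Real.log t⁻¹ - 3 := by
    rw [hlogtinv]
    have := hlog2X
    rw [hlogR] at this
    nlinarith [hlogt, hlogrbar, hlog2]
  -- lower bound for scal x
  have hscal_lb : (6 * K' + 1) * R ≤ scal x := by
    have h1 : (6 * K' + 1) * R ≤ 2 * X * (Real.log (2 * X) - Real.log t⁻¹ - 3) := by
      nlinarith
    linarith
  -- upper bound for scal x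
  have hscal_ub : scal x < 6 * K' * R := by
    have h1 := hscal x
    have h2 := hRm x
    have h3 : K * (r₀ ^ 2)⁻¹ ≤ K' * R := by
      apply mul_le_mul_of_nonneg_right (le_max_left _ _) hRpos.le
    linarith
  nlinarith
end
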